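/- Let f denote the Davenport–Heilbronn function. Then f satisfies the functional equation f(s) = 2^s π^{s−1} 5^{1/2−s} Γ(1−s) cos(πs/2) · f(1−s) for every s ∈ ℂ that is not an integer. -/

import Mathlib

/-!
For an odd primitive character `χ` mod `q` the Hurwitz-zeta functional equation gives the
asymmetric form `L(s, χ) = W(χ) 2^s π^(s-1) q^(1/2-s) Γ(1-s) cos(πs/2) L(1-s, χ̄)`, with root
number `W(χ) = τ(χ) / (i √q)`. Evaluating the Gauss sum of `χ₅` through `sin(2π/5)` and
`sin(π/5)` shows that `θ` is chosen precisely so that `W(χ₅) = e^{2iθ}` and `W(χ̄₅) = e^{-2iθ}`.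
Hence `s ↦ 1 - s` exchanges `e^{-iθ} L(s, χ₅)` and `e^{iθ} L(s, χ̄₅)` up to the common factor,
and their sum `f` satisfies the functional equation.
-/

open Complex DirichletCharacter

/-- The complex-conjugate character of a Dirichlet character `χ` (with values in `ℂ`). -/
noncomputable def conjChar {q : ℕ} (χ : DirichletCharacter ℂ q) : DirichletCharacter ℂ q :=
  χ.ringHomComp (starRingEnd ℂ)

open scoped Real

namespace Complex

lemma exp_neg_sub_exp_pi_mul_I_mul_one_sub_div_two (s : ℂ) :
    cexp (-π * I * (1 - s) / 2) - cexp (π * I * (1 - s) / 2) = -2 * I * cos (π * s / 2) := by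
  rw [← sin_pi_div_two_sub, sin, show π / 2 - π * s / 2 = π * (1 - s) / 2 by ring]
  ring_nf
  rw [I_sq]
  ring_nf

lemma two_mul_cpow_half_mul_cpow_neg_mul_two_pi_cpow {N : ℕ} (hN : N ≠ 0) (s : ℂ) :
    2 * (N : ℂ) ^ (1 / 2 : ℂ) * (N : ℂ) ^ (-s) * (2 * π) ^ (s - 1) =
      2 ^ s * π ^ (s - 1) * (N : ℂ) ^ (1 / 2 - s) := by
  have h2π : (2 * π : ℂ) ^ (s - 1) = 2 ^ (s - 1) * π ^ (s - 1) := by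
    simpa using mul_cpow_ofReal_nonneg zero_le_two Real.pi_pos.le (s - 1)
  rw [h2π, sub_eq_add_neg (1 / 2 : ℂ), cpow_add _ _ (Nat.cast_ne_zero.mpr hN),
    cpow_sub _ _ two_ne_zero, cpow_one]
  field_simp

end Complex

namespace Real

lemma cos_two_mul_of_tan_sq {θ p q : ℝ} (hcos : cos θ ≠ 0) (hp : p ≠ 0) (hpq : p + q ≠ 0)
    (h : tan θ ^ 2 = (p - q) / (p + q)) : cos (2 * θ) = q / p := by
  rw [cos_two_mul, ← inv_one_add_tan_sq hcos, h, one_add_div hpq, inv_div,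
    show p + q + (p - q) = 2 * p by ring]
  field_simp
  ring

lemma sin_sq_pi_div_five : sin (π / 5) ^ 2 = (5 - √5) / 8 := by
  have h5 : √5 ^ 2 = 5 := sq_sqrt (by norm_num)
  rw [sin_sq, cos_pi_div_five]
  linear_combination -h5 / 16

lemma sin_sq_two_pi_div_five : sin (2 * π / 5) ^ 2 = (5 + √5) / 8 := by
  have h5 : √5 ^ 2 = 5 := sq_sqrt (by norm_num)
  have hcos : cos (2 * π / 5) = (√5 - 1) / 4 := by
    rw [mul_div_assoc, cos_two_mul, cos_pi_div_five]
    linear_combination h5 / 8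
  rw [sin_sq, hcos]
  linear_combination -h5 / 16

section

variable {θ : ℝ}

lemma sqrt_five_mul_cos_two_mul_of_tan_sq (hθ : θ ∈ Set.Ioo 0 (π / 2))
    (htan : tan θ ^ 2 = (√2 - √(1 + 1 / √5)) / (√2 + √(1 + 1 / √5))) :
    √5 * cos (2 * θ) = 2 * sin (2 * π / 5) := by
  have hcos : cos (2 * θ) = √(1 + 1 / √5) / √2 :=
    cos_two_mul_of_tan_sq (cos_pos_of_mem_Ioo ⟨by linarith [hθ.1, pi_pos], hθ.2⟩).ne'
      (by positivity) (by positivity) htan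
  have h5 : √5 ^ 2 = 5 := sq_sqrt (by norm_num)
  rw [← sq_eq_sq₀ (by rw [hcos]; positivity)
    (mul_nonneg zero_le_two (sin_nonneg_of_nonneg_of_le_pi (by positivity) (by linarith [pi_pos]))),
    mul_pow, mul_pow, sin_sq_two_pi_div_five, hcos, div_pow, sq_sqrt zero_le_two,
    sq_sqrt (by positivity : (0 : ℝ) ≤ 1 + 1 / √5)]
  field_simp
  linear_combination 8 * h5

lemma sqrt_five_mul_sin_two_mul_of_tan_sq (hθ : θ ∈ Set.Ioo 0 (π / 2))
    (htan : tan θ ^ 2 = (√2 - √(1 + 1 / √5)) / (√2 + √(1 + 1 / √5))) :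
    √5 * sin (2 * θ) = 2 * sin (π / 5) := by
  have hcos := congrArg (· ^ 2) (sqrt_five_mul_cos_two_mul_of_tan_sq hθ htan)
  have h5 : √5 ^ 2 = 5 := sq_sqrt (by norm_num)
  simp only [mul_pow, h5, sin_sq_two_pi_div_five] at hcos
  rw [← sq_eq_sq₀ (mul_nonneg (sqrt_nonneg 5)
      (sin_nonneg_of_nonneg_of_le_pi (by linarith [hθ.1]) (by linarith [hθ.2])))
    (mul_nonneg zero_le_two (sin_nonneg_of_nonneg_of_le_pi (by positivity) (by linarith [pi_pos]))),
    mul_pow, mul_pow, sin_sq, sin_sq_pi_div_five, h5]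
  linear_combination -hcos

end

end Real

namespace ZMod

lemma LFunction_const_mul {N : ℕ} [NeZero N] (a : ℂ) (Φ : ZMod N → ℂ) (s : ℂ) :
    LFunction (fun j ↦ a * Φ j) s = a * LFunction Φ s := by
  simp only [LFunction, Finset.mul_sum]
  congr 1 with j
  ring

lemma stdAddChar_sub_stdAddChar_neg {N : ℕ} [NeZero N] (j : ℤ) :
    stdAddChar (j : ZMod N) - stdAddChar (-j : ZMod N) = 2 * I * sin (2 * π * j / N) := by
  rw [← Int.cast_neg, stdAddChar_coe, stdAddChar_coe, sin, Int.cast_neg]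
  ring_nf
  rw [I_sq]
  ring_nf

end ZMod

namespace DirichletCharacter

open ZMod

section

variable {N : ℕ} {χ : DirichletCharacter ℂ N}

lemma conjChar_eq_inv (χ : DirichletCharacter ℂ N) : conjChar χ = χ⁻¹ :=
  MulChar.star_eq_inv χ

lemma Odd.inv (hχ : χ.Odd) : χ⁻¹.Odd := by
  rw [DirichletCharacter.Odd, MulChar.inv_apply_eq_inv', hχ, inv_neg, inv_one]

lemma Odd.apply_zero (hχ : χ.Odd) : χ 0 = 0 := by
  refine χ.map_zero' fun hN ↦ ?_
  subst hN
  have : χ (-1) = χ 1 := congrArg χ (Subsingleton.elim _ _)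
  rw [hχ, map_one] at this
  norm_num at this

lemma IsPrimitive.inv (hχ : χ.IsPrimitive) : χ⁻¹.IsPrimitive := by
  rw [IsPrimitive, conductor_inv]
  exact hχ

lemma isPrimitive_of_prime {R : Type*} [CommMonoidWithZero R] {p : ℕ} (hp : p.Prime)
    {χ : DirichletCharacter R p} (hχ : χ ≠ 1) : χ.IsPrimitive := by
  have : NeZero p := ⟨hp.ne_zero⟩
  exact (hp.eq_one_or_self_of_dvd _ χ.conductor_dvd_level).resolve_left
    (mt eq_one_iff_conductor_eq_one.mpr hχ)

end

section

variable {N : ℕ} [NeZero N] {χ : DirichletCharacter ℂ N}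

lemma IsPrimitive.fourierTransform_of_odd (hχ : χ.IsPrimitive) (hodd : χ.Odd) :
    𝓕 χ = fun k ↦ -gaussSum χ stdAddChar * χ⁻¹ k := by
  funext k
  rw [hχ.fourierTransform_eq_inv_mul_gaussSum, hodd.inv.to_fun]
  ring

lemma IsPrimitive.fourierTransform_comp_neg_of_odd (hχ : χ.IsPrimitive) (hodd : χ.Odd) :
    𝓕 (fun j ↦ χ (-j)) = fun k ↦ gaussSum χ stdAddChar * χ⁻¹ k := by
  rw [show (fun j ↦ χ (-j)) = -χ from funext hodd.to_fun, map_neg,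
    hχ.fourierTransform_of_odd hodd]
  funext k
  simp only [Pi.neg_apply, neg_mul, neg_neg]

theorem IsPrimitive.LFunction_eq_gaussSum_mul_of_odd (hχ : χ.IsPrimitive) (hodd : χ.Odd)
    {s : ℂ} (hs : ∀ n : ℕ, s ≠ n + 1) :
    LFunction χ s = -2 * I * gaussSum χ stdAddChar * (N : ℂ) ^ (-s) * (2 * π) ^ (s - 1) *
      Gamma (1 - s) * cos (π * s / 2) * LFunction χ⁻¹ (1 - s) := by
  have hs' : ∀ n : ℕ, 1 - s ≠ -n := fun n h ↦ hs n (by linear_combination -h)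
  have h := ZMod.LFunction_one_sub χ hs' (.inl hodd.apply_zero)
  rw [hχ.fourierTransform_of_odd hodd, hχ.fourierTransform_comp_neg_of_odd hodd,
    LFunction_const_mul, LFunction_const_mul, sub_sub_cancel, sub_sub_cancel_left, neg_sub] at h
  rw [LFunction, LFunction, h]
  linear_combination (N : ℂ) ^ (-s) * (2 * π) ^ (s - 1) * Gamma (1 - s) * gaussSum χ stdAddChar *
    ZMod.LFunction ⇑(χ⁻¹) (1 - s) * exp_neg_sub_exp_pi_mul_I_mul_one_sub_div_two s

theorem IsPrimitive.LFunction_eq_rootNumber_mul_of_odd (hχ : χ.IsPrimitive) (hodd : χ.Odd)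
    {s : ℂ} (hs : ∀ n : ℕ, s ≠ n + 1) :
    LFunction χ s = rootNumber χ * 2 ^ s * π ^ (s - 1) * (N : ℂ) ^ (1 / 2 - s) *
      Gamma (1 - s) * cos (π * s / 2) * LFunction χ⁻¹ (1 - s) := by
  have hτ : gaussSum χ stdAddChar = rootNumber χ * I * (N : ℂ) ^ (1 / 2 : ℂ) := by
    have : (N : ℂ) ^ (1 / 2 : ℂ) ≠ 0 := by simp [NeZero.ne N]
    rw [rootNumber, if_neg hodd.not_even, pow_one]
    field_simp
  rw [hχ.LFunction_eq_gaussSum_mul_of_odd hodd hs, hτ]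
  linear_combination rootNumber χ * Gamma (1 - s) * cos (π * s / 2) * LFunction χ⁻¹ (1 - s) *
    (two_mul_cpow_half_mul_cpow_neg_mul_two_pi_cpow (NeZero.ne N) s -
      2 * (N : ℂ) ^ (1 / 2 : ℂ) * (N : ℂ) ^ (-s) * (2 * π) ^ (s - 1) * I_sq)

end

section

variable {χ : DirichletCharacter ℂ 5}

lemma odd_of_apply_two_sq (h : χ 2 ^ 2 = -1) : χ.Odd := by
  rw [DirichletCharacter.Odd, show (-1 : ZMod 5) = 2 * 2 from rfl, map_mul, ← sq, h]

lemma isPrimitive_of_apply_two_sq (h : χ 2 ^ 2 = -1) : χ.IsPrimitive :=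
  isPrimitive_of_prime Nat.prime_five fun h1 ↦ by
    rw [h1, MulChar.one_apply (by decide : IsUnit (2 : ZMod 5))] at h
    norm_num at h

lemma gaussSum_eq_of_apply_two_sq (h : χ 2 ^ 2 = -1) :
    gaussSum χ stdAddChar = 2 * I * (Real.sin (2 * π / 5) + χ 2 * Real.sin (π / 5)) := by
  have h4 : χ 4 = -1 := by rw [← h, sq, ← map_mul]; rfl
  have h3 : χ 3 = -χ 2 := by rw [show (3 : ZMod 5) = 2 * 4 from rfl, map_mul, h4, mul_neg_one]
  have hτ : gaussSum χ stdAddChar = χ 0 * stdAddChar (0 : ZMod 5) + χ 1 * stdAddChar (1 : ZMod 5)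
      + χ 2 * stdAddChar (2 : ZMod 5) + χ 3 * stdAddChar (3 : ZMod 5)
      + χ 4 * stdAddChar (4 : ZMod 5) :=
    Fin.sum_univ_five _
  have hsin1 := stdAddChar_sub_stdAddChar_neg (N := 5) 1
  have hsin2 := stdAddChar_sub_stdAddChar_neg (N := 5) 2
  simp only [Int.cast_one, Int.cast_ofNat, Nat.cast_ofNat, mul_one,
    show (-1 : ZMod 5) = 4 from rfl, show (-2 : ZMod 5) = 3 from rfl] at hsin1 hsin2
  rw [show 2 * (π : ℂ) * 2 / 5 = π - π / 5 by ring, sin_pi_sub] at hsin2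
  rw [hτ, (odd_of_apply_two_sq h).apply_zero, map_one, h3, h4]
  push_cast
  linear_combination hsin1 + χ 2 * hsin2

lemma rootNumber_eq_of_apply_two_sq (h : χ 2 ^ 2 = -1) :
    rootNumber χ = 2 * (Real.sin (2 * π / 5) + χ 2 * Real.sin (π / 5)) / √5 := by
  have h5 : ((5 : ℕ) : ℂ) ^ (1 / 2 : ℂ) = √5 := by
    rw [Real.sqrt_eq_rpow, ofReal_cpow (by norm_num)]
    norm_num
  rw [rootNumber, if_neg (odd_of_apply_two_sq h).not_even, pow_one,
    gaussSum_eq_of_apply_two_sq h, h5]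
  field_simp

lemma rootNumber_eq_cexp_of_tan_sq (h : χ 2 ^ 2 = -1) {θ : ℝ} (hθ : θ ∈ Set.Ioo 0 (π / 2))
    (htan : Real.tan θ ^ 2 = (√2 - √(1 + 1 / √5)) / (√2 + √(1 + 1 / √5))) :
    rootNumber χ = cexp (2 * θ * χ 2) := by
  have hcos : (√5 : ℂ) * Real.cos (2 * θ) = 2 * Real.sin (2 * π / 5) := by
    exact_mod_cast Real.sqrt_five_mul_cos_two_mul_of_tan_sq hθ htan
  have hsin : (√5 : ℂ) * Real.sin (2 * θ) = 2 * Real.sin (π / 5) := by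
    exact_mod_cast Real.sqrt_five_mul_sin_two_mul_of_tan_sq hθ htan
  have hexp : cexp (2 * θ * χ 2) = Real.cos (2 * θ) + χ 2 * Real.sin (2 * θ) := by
    have : (χ 2 - I) * (χ 2 + I) = 0 := by linear_combination h - I_sq
    rcases mul_eq_zero.mp this with hI | hI
    · rw [sub_eq_zero.mp hI, show 2 * θ * I = ((2 * θ : ℝ) : ℂ) * I by push_cast; ring,
        exp_mul_I, ofReal_cos, ofReal_sin]
      ring
    · rw [eq_neg_of_add_eq_zero_left hI,
        show 2 * θ * -I = ((-(2 * θ) : ℝ) : ℂ) * I by push_cast; ring, exp_mul_I, ofReal_cos,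
        ofReal_sin, ofReal_neg, cos_neg, sin_neg]
      ring
  have h5 : (√5 : ℂ) ≠ 0 := by exact_mod_cast (Real.sqrt_pos.mpr (by norm_num : (0 : ℝ) < 5)).ne'
  rw [rootNumber_eq_of_apply_two_sq h, hexp]
  field_simp
  linear_combination -hcos - χ 2 * hsin

end

end DirichletCharacter

/-- The Davenport–Heilbronn function
`f(s) = ½ sec θ (e^{-iθ} L(s,χ₅) + e^{iθ} L(s,χ̄₅))`, where `χ₅` is the Dirichlet character
mod 5 with `χ₅(2) = i` and `tan²θ = (√2 - √(1+1/√5))/(√2 + √(1+1/√5))` with `θ ∈ (0, π/2)`,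
satisfies `f(s) = 2^s π^{s-1} 5^{1/2-s} Γ(1-s) cos(πs/2) f(1-s)` for all non-integer `s`. -/
theorem davenport_heilbronn_functional_equation
    (χ₅ : DirichletCharacter ℂ 5) (hχ : χ₅ (2 : ZMod 5) = I)
    (θ : ℝ) (hθ : θ ∈ Set.Ioo 0 (Real.pi / 2))
    (htan : Real.tan θ ^ 2 =
      (Real.sqrt 2 - Real.sqrt (1 + 1 / Real.sqrt 5)) /
        (Real.sqrt 2 + Real.sqrt (1 + 1 / Real.sqrt 5)))
    (f : ℂ → ℂ)
    (hf : ∀ s : ℂ, f s = (1 / 2) * ((Real.cos θ : ℂ))⁻¹ *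
      (Complex.exp (-(I * θ)) * LFunction χ₅ s +
        Complex.exp (I * θ) * LFunction (conjChar χ₅) s)) :
    ∀ s : ℂ, (∀ n : ℤ, s ≠ (n : ℂ)) →
      f s = (2 : ℂ) ^ s * (Real.pi : ℂ) ^ (s - 1) * (5 : ℂ) ^ ((1 : ℂ) / 2 - s) *
        Complex.Gamma (1 - s) * Complex.cos (Real.pi * s / 2) * f (1 - s) := by
  intro s hs
  have hχ2 : χ₅ 2 ^ 2 = -1 := by rw [hχ, I_sq]
  have hχinv : χ₅⁻¹ 2 = -I := by rw [MulChar.inv_apply_eq_inv', hχ, inv_I]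
  have hχinv2 : χ₅⁻¹ 2 ^ 2 = -1 := by rw [hχinv, neg_sq, I_sq]
  have hs' : ∀ n : ℕ, s ≠ n + 1 := fun n h ↦ hs (n + 1) (by rw [h]; push_cast; rfl)
  have hL := (isPrimitive_of_apply_two_sq hχ2).LFunction_eq_rootNumber_mul_of_odd
    (odd_of_apply_two_sq hχ2) hs'
  have hL' := (isPrimitive_of_apply_two_sq hχinv2).LFunction_eq_rootNumber_mul_of_odd
    (odd_of_apply_two_sq hχinv2) hs'
  rw [rootNumber_eq_cexp_of_tan_sq hχ2 hθ htan, hχ] at hL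
  rw [rootNumber_eq_cexp_of_tan_sq hχinv2 hθ htan, hχinv, inv_inv] at hL'
  have e1 : cexp (-(I * θ)) * cexp (2 * θ * I) = cexp (I * θ) := by rw [← exp_add]; ring_nf
  have e2 : cexp (I * θ) * cexp (2 * θ * -I) = cexp (-(I * θ)) := by rw [← exp_add]; ring_nf
  rw [hf, hf, conjChar_eq_inv, hL, hL', Nat.cast_ofNat]
  set B := (2 : ℂ) ^ s * (π : ℂ) ^ (s - 1) * (5 : ℂ) ^ ((1 : ℂ) / 2 - s) * Gamma (1 - s) *
    cos (π * s / 2)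
  linear_combination (1 / 2 * (Real.cos θ : ℂ)⁻¹ * B) *
    (LFunction χ₅⁻¹ (1 - s) * e1 + LFunction χ₅ (1 - s) * e2)
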